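/- Let μ = C + l_1 + l_2 be a curved symmetric DGLA structure on a ℤ-graded vector space E (a curved L∞-structure whose only components are a 0-form C ∈ E_1, a symmetric vector valued 1-form l_1 of degree +1, and a symmetric vector valued 2-form l_2 of degree +1), and let π ∈ E_0. Then Id_E + π (where Id_E is the identity vector valued 1-form and π is viewed as a 0-form) is a Nijenhuis vector valued form with curvature π, with respect to μ and with square itself, if and only if π is a Maurer–Cartan element of the curved DGLA, i.e. (l_1(π) − C) − (1/2)·l_2(π,π) = 0. -/

import Mathlib

/-!
Write `N = π + Id`. For a form `F`, `ι_F N = F`, while `ι_N F` adds `F(π, ·)` to the insertion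
of the identity, which multiplies a graded symmetric `k`-form by `k`. Hence, for `F` of arity at
most two, `[N, F] = (F₁(π) - F₀) + F₂(π, ·) + F₂` is again of arity at most two. Applying this
twice, `[N, [N, μ]]` agrees with `[N, μ]` in every arity except zero, where the two differ by
`l₂(π, π) - 2 (l₁(π) - C)`: the Maurer–Cartan equation. Finally `[N, N] = 0` for the degree-zero
form `N`.
-/

open scoped DirectSum
open Classical

noncomputable section

namespace RN

section Core

variable (𝕜 : Type) [Field 𝕜] [CharZero 𝕜]
variable (E : ℤ → Type) [∀ i, AddCommGroup (E i)] [∀ i, Module 𝕜 (E i)]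

/-- Raw vector-valued forms on the graded vector space `E`: for every arity `n` and every
vector of (input) degrees `ι`, a function on homogeneous tuples with values in the total
graded space `⨁ i, E i`. -/
abbrev RawForm : Type :=
  ∀ n : ℕ, ∀ ι : Fin n → ℤ, (∀ j, E (ι j)) → ⨁ i, E i

/-- Multilinearity (in each slot, on homogeneous arguments). -/
def IsMultilin (F : RawForm E) : Prop :=
  ∀ (n : ℕ) (ι : Fin n → ℤ) (x : ∀ j, E (ι j)) (j : Fin n) (a b : E (ι j)) (c : 𝕜),
    F n ι (Function.update x j (a + b)) =
        F n ι (Function.update x j a) + F n ι (Function.update x j b) ∧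
      F n ι (Function.update x j (c • a)) = c • F n ι (Function.update x j a)

/-- Graded symmetry: swapping two adjacent homogeneous arguments multiplies the value
by the Koszul sign `(-1)^{|X||Y|}`. -/
def IsGradedSym (F : RawForm E) : Prop :=
  ∀ (n : ℕ) (ι : Fin n → ℤ) (x : ∀ j, E (ι j)) (p q : Fin n), (p : ℕ) + 1 = (q : ℕ) →
    F n (fun j => ι (Equiv.swap p q j)) (fun j => x (Equiv.swap p q j)) =
      ((-1 : 𝕜) ^ (ι p * ι q)) • F n ι x

/-- `F` has degree `d`: its value on homogeneous arguments of degrees `ι` is homogeneous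
of degree `(∑ j, ι j) + d`. -/
def IsOfDeg (d : ℤ) (F : RawForm E) : Prop :=
  ∀ (n : ℕ) (ι : Fin n → ℤ) (x : ∀ j, E (ι j)) (m : ℤ),
    m ≠ (∑ j, ι j) + d → F n ι x m = 0

/-- Symmetric vector valued form of degree `d`. -/
def IsSVF (d : ℤ) (F : RawForm E) : Prop :=
  IsMultilin 𝕜 E F ∧ IsGradedSym 𝕜 E F ∧ IsOfDeg E d F

/-- `F` is (concentrated in) a `k`-form. -/
def IsArity (k : ℕ) (F : RawForm E) : Prop :=
  ∀ n, n ≠ k → ∀ (ι : Fin n → ℤ) (x : ∀ j, E (ι j)), F n ι x = 0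

/-- `F` has no 0-form (curvature) component. -/
def NoCurv (F : RawForm E) : Prop :=
  ∀ (ι : Fin 0 → ℤ) (x : ∀ j, E (ι j)), F 0 ι x = 0

/-- `(k, n-k)`-shuffles of `Fin n`. -/
def IsShuffle (k : ℕ) {n : ℕ} (σ : Equiv.Perm (Fin n)) : Prop :=
  ∀ i j : Fin n, i < j → ((j : ℕ) < k ∨ k ≤ (i : ℕ)) → σ i < σ j

/-- The Koszul sign of the rearrangement `(X_{σ(1)},…,X_{σ(n)})` of homogeneous elements
of degrees `ι`. -/
def koszulSign {n : ℕ} (ι : Fin n → ℤ) (σ : Equiv.Perm (Fin n)) : 𝕜 :=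
  ∏ p ∈ Finset.univ.filter (fun p : Fin n × Fin n => p.1 < p.2 ∧ σ p.2 < σ p.1),
    (-1 : 𝕜) ^ (ι (σ p.1) * ι (σ p.2))

/-- Prepend a degree to a vector of degrees. -/
def dcons {n : ℕ} (m : ℤ) (rest : Fin n → ℤ) : Fin (n + 1) → ℤ :=
  fun j => if h : (j : ℕ) = 0 then m else rest ⟨(j : ℕ) - 1, by have := j.isLt; omega⟩

/-- Prepend a homogeneous element to a tuple of homogeneous elements. -/
def dconsV {n : ℕ} {m : ℤ} {rest : Fin n → ℤ} (v : E m) (xs : ∀ i, E (rest i)) :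
    ∀ j : Fin (n + 1), E (dcons m rest j) := fun j => by
  unfold dcons
  by_cases h : (j : ℕ) = 0
  · rw [dif_pos h]; exact v
  · rw [dif_neg h]; exact xs ⟨(j : ℕ) - 1, by have := j.isLt; omega⟩

/-- The insertion operator `ι_F G`, summing over shuffles with Koszul signs. -/
def ins (F G : RawForm E) : RawForm E :=
  fun n ι x =>
    ∑ k : Fin (n + 1),
      ∑ σ ∈ Finset.univ.filter (fun σ : Equiv.Perm (Fin n) => IsShuffle (k : ℕ) σ),
        koszulSign 𝕜 ι σ •
          DFinsupp.sum
            (F (k : ℕ)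
              (fun i => ι (σ ⟨(i : ℕ), by have h1 := i.isLt; have h2 := k.isLt; omega⟩))
              (fun i => x (σ ⟨(i : ℕ), by have h1 := i.isLt; have h2 := k.isLt; omega⟩)))
            (fun m v =>
              G (n - (k : ℕ) + 1)
                (dcons m
                  (fun i => ι (σ ⟨(k : ℕ) + (i : ℕ), by have h1 := i.isLt; have h2 := k.isLt; omega⟩)))
                (dconsV E v
                  (fun i => x (σ ⟨(k : ℕ) + (i : ℕ), by have h1 := i.isLt; have h2 := k.isLt; omega⟩))))

/-- The Richardson–Nijenhuis bracket `[F,G]_RN = ι_F G - (-1)^{dK·dL} ι_G F` of forms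
of degrees `dK` and `dL`. -/
def rnb (dK dL : ℤ) (F G : RawForm E) : RawForm E :=
  fun n ι x => ins 𝕜 E F G n ι x - ((-1 : 𝕜) ^ (dK * dL)) • ins 𝕜 E G F n ι x

/-- An element of the graded vector space, regarded as a vector valued 0-form. -/
def ofElem (v : ⨁ i, E i) : RawForm E := fun n _ _ => if n = 0 then v else 0

/-- The Euler map `S(X) = -|X|·X`, a vector valued 1-form of degree 0. -/
def euler : RawForm E :=
  fun n ι x =>
    if h : n = 1 then
      (-(ι ⟨0, by omega⟩)) • DirectSum.of E (ι ⟨0, by omega⟩) (x ⟨0, by omega⟩)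
    else 0

/-- The identity map of `E`, regarded as a vector valued 1-form of degree 0. -/
def idF : RawForm E :=
  fun n ι x =>
    if h : n = 1 then DirectSum.of E (ι ⟨0, by omega⟩) (x ⟨0, by omega⟩) else 0

/-- The arity-`k` component of a vector valued form. -/
def comp (F : RawForm E) (k : ℕ) : RawForm E :=
  fun n ι x => if n = k then F n ι x else 0

end Core

section

variable {𝕜 : Type} [Field 𝕜]
variable {E : ℤ → Type} [∀ i, AddCommGroup (E i)] [∀ i, Module 𝕜 (E i)]

theorem rawForm_congr (F : RawForm E) {n : ℕ} {ι ι' : Fin n → ℤ} {x : ∀ j, E (ι j)}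
    {x' : ∀ j, E (ι' j)} (h : ∀ j, ι j = ι' j) (hx : ∀ j, HEq (x j) (x' j)) :
    F n ι x = F n ι' x' := by
  obtain rfl : ι = ι' := funext h
  obtain rfl : x = x' := funext fun j => eq_of_heq (hx j)
  rfl

theorem rawForm_apply_dcons_const (F : RawForm E) (π : E 0) (n : ℕ) :
    F (n + 1) (dcons 0 fun _ => 0) (dconsV E π fun _ => π) = F (n + 1) (fun _ => 0) fun _ => π :=
  rawForm_congr F (fun j => by unfold dcons; split <;> rfl)
    (fun j => by unfold dconsV; split <;> exact cast_heq _ _)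

theorem isShuffle_one (k : ℕ) {n : ℕ} : IsShuffle k (1 : Equiv.Perm (Fin n)) :=
  fun _ _ hij _ => hij

theorem IsShuffle.eq_one {k n : ℕ} {σ : Equiv.Perm (Fin n)} (h : IsShuffle k σ)
    (hk : k = 0 ∨ n ≤ k) : σ = 1 := by
  have hσ : StrictMono σ := fun i j hij => h i j hij <| by
    rcases hk with rfl | hk
    · exact Or.inr (Nat.zero_le _)
    · exact Or.inl (lt_of_lt_of_le j.isLt hk)
  have := Subsingleton.elim (StrictMono.orderIsoOfSurjective σ hσ σ.surjective) (OrderIso.refl _)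
  ext i
  exact congrArg Fin.val (DFunLike.congr_fun this i)

theorem filter_isShuffle_eq_singleton_one {k n : ℕ} (hk : k = 0 ∨ n ≤ k) :
    Finset.univ.filter (fun σ : Equiv.Perm (Fin n) => IsShuffle k σ) = {1} :=
  Finset.eq_singleton_iff_unique_mem.mpr
    ⟨by simp [isShuffle_one], fun _ hσ => (Finset.mem_filter.mp hσ).2.eq_one hk⟩

-- The arity enters as a hypothesis `k = 1` so that the lemma matches the cast `((1 : Fin 3) : ℕ)`
-- left by unfolding `ins`; the `sum_ofElemAddIdF_*` lemmas use the same device.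
theorem filter_isShuffle_of_eq_one {k : ℕ} (hk : k = 1) :
    Finset.univ.filter (fun σ : Equiv.Perm (Fin 2) => IsShuffle k σ) = {1, Equiv.swap 0 1} := by
  subst hk
  rw [Finset.filter_true_of_mem fun σ _ i j hij hk => absurd hk (by omega)]
  decide

theorem koszulSign_one {n : ℕ} (ι : Fin n → ℤ) : koszulSign 𝕜 ι 1 = 1 :=
  Finset.prod_eq_one fun _ hp => absurd (Finset.mem_filter.mp hp).2 fun h => h.1.not_gt h.2

theorem koszulSign_swap (ι : Fin 2 → ℤ) :
    koszulSign 𝕜 ι (Equiv.swap 0 1) = (-1 : 𝕜) ^ (ι 1 * ι 0) := by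
  have : Finset.univ.filter (fun p : Fin 2 × Fin 2 =>
      p.1 < p.2 ∧ Equiv.swap 0 1 p.2 < Equiv.swap 0 1 p.1) = {(0, 1)} := by
    decide
  simp [koszulSign, this]

theorem rnb_zero_apply (d : ℤ) (F G : RawForm E) (n : ℕ) (ι : Fin n → ℤ) (x : ∀ j, E (ι j)) :
    rnb 𝕜 E 0 d F G n ι x = ins 𝕜 E F G n ι x - ins 𝕜 E G F n ι x := by
  simp [rnb]

theorem rnb_zero_zero_self (F : RawForm E) : rnb 𝕜 E 0 0 F F = 0 := by
  funext n ι x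
  simp [rnb]

def VanishesOnZeroArg (F : RawForm E) : Prop :=
  ∀ (n : ℕ) (ι : Fin n → ℤ) (x : ∀ j, E (ι j)) (j : Fin n), x j = 0 → F n ι x = 0

theorem IsMultilin.vanishesOnZeroArg {F : RawForm E} (hF : IsMultilin 𝕜 E F) :
    VanishesOnZeroArg F := by
  intro n ι x j hx
  simpa [← hx] using (hF n ι x j 0 0 0).2

structure IsAtMostBinary (𝕜 : Type) [Field 𝕜] {E : ℤ → Type} [∀ i, AddCommGroup (E i)]
    [∀ i, Module 𝕜 (E i)] (F : RawForm E) : Prop where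
  vanishesOnZeroArg : VanishesOnZeroArg F
  apply_of_three_le : ∀ n, 3 ≤ n → ∀ (ι : Fin n → ℤ) (x : ∀ j, E (ι j)), F n ι x = 0
  apply_two_swap : ∀ (ι : Fin 2 → ℤ) (x : ∀ j, E (ι j)),
    F 2 (fun j => ι (Equiv.swap 0 1 j)) (fun j => x (Equiv.swap 0 1 j)) =
      (-1 : 𝕜) ^ (ι 0 * ι 1) • F 2 ι x

theorem IsAtMostBinary.ofElem_add_add (v : ⨁ i, E i) {l1 l2 : RawForm E}
    (h1 : IsMultilin 𝕜 E l1) (h1a : IsArity E 1 l1) (h2 : IsMultilin 𝕜 E l2)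
    (h2s : IsGradedSym 𝕜 E l2) (h2a : IsArity E 2 l2) :
    IsAtMostBinary 𝕜 (ofElem E v + l1 + l2) where
  vanishesOnZeroArg n ι x j hx := by
    have hn : n ≠ 0 := by rintro rfl; exact j.elim0
    simp [ofElem, hn, h1.vanishesOnZeroArg n ι x j hx, h2.vanishesOnZeroArg n ι x j hx]
  apply_of_three_le n hn ι x := by
    simp [ofElem, h1a n (by omega), h2a n (by omega), show n ≠ 0 by omega]
  apply_two_swap ι x := by
    simp [ofElem, h1a 2 (by decide), h2s 2 ι x 0 1 rfl]

section Insertion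

variable (π : E 0)

def ofElemAddIdF : RawForm E := ofElem E (DirectSum.of E 0 π) + idF E

theorem ofElemAddIdF_apply_zero (ι : Fin 0 → ℤ) (x : ∀ j, E (ι j)) :
    ofElemAddIdF π 0 ι x = DirectSum.of E 0 π := by
  simp [ofElemAddIdF, ofElem, idF]

theorem ofElemAddIdF_apply_one (ι : Fin 1 → ℤ) (x : ∀ j, E (ι j)) :
    ofElemAddIdF π 1 ι x = DirectSum.of E (ι 0) (x 0) := by
  simp [ofElemAddIdF, ofElem, idF]

theorem ofElemAddIdF_apply_of_two_le {n : ℕ} (hn : 2 ≤ n) (ι : Fin n → ℤ) (x : ∀ j, E (ι j)) :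
    ofElemAddIdF π n ι x = 0 := by
  simp [ofElemAddIdF, ofElem, idF, show n ≠ 0 by omega, show n ≠ 1 by omega]

theorem sum_ofElemAddIdF_dcons_of_eq_zero {j : ℕ} (hj : j = 0) (rest : Fin j → ℤ)
    (xs : ∀ i, E (rest i)) (w : ⨁ i, E i) :
    w.sum (fun m v => ofElemAddIdF π (j + 1) (dcons m rest) (dconsV E v xs)) = w := by
  subst hj
  have : ∀ m (v : E m), ofElemAddIdF π (0 + 1) (dcons m rest) (dconsV E v xs) =
      DirectSum.of E m v := fun m v => ofElemAddIdF_apply_one π _ _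
  simp only [this]
  exact DFinsupp.sum_single

theorem ins_ofElemAddIdF (F : RawForm E) (n : ℕ) (ι : Fin n → ℤ) (x : ∀ j, E (ι j)) :
    ins 𝕜 E F (ofElemAddIdF π) n ι x = F n ι x := by
  rw [ins, Finset.sum_eq_single (Fin.last n)]
  · rw [filter_isShuffle_eq_singleton_one (Or.inr (Fin.val_last n).ge), Finset.sum_singleton,
      koszulSign_one, one_smul, sum_ofElemAddIdF_dcons_of_eq_zero π (by simp)]
    rfl
  · intro k _ hk
    have hkn : (k : ℕ) < n := Fin.val_lt_last hk
    exact Finset.sum_eq_zero fun σ _ => smul_eq_zero_of_right _ <|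
      DFinsupp.sum_eq_zero fun m => ofElemAddIdF_apply_of_two_le π (by omega) _ _
  · simp

variable {π} {F : RawForm E}

theorem sum_ofElemAddIdF_of_eq_zero (hF : VanishesOnZeroArg F) {j : ℕ} (hj : j = 0)
    (a : Fin j → ℤ) (y : ∀ i, E (a i)) {q : ℕ} (rest : Fin q → ℤ) (xs : ∀ i, E (rest i)) :
    (ofElemAddIdF π j a y).sum (fun m v => F (q + 1) (dcons m rest) (dconsV E v xs)) =
      F (q + 1) (dcons 0 rest) (dconsV E π xs) := by
  subst hj
  rw [ofElemAddIdF_apply_zero]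
  exact DFinsupp.sum_single_index (hF _ _ _ 0 rfl)

theorem sum_ofElemAddIdF_of_eq_one (hF : VanishesOnZeroArg F) {j : ℕ} (hj : j = 1)
    (a : Fin j → ℤ) (y : ∀ i, E (a i)) (h0 : 0 < j) {q : ℕ} (rest : Fin q → ℤ)
    (xs : ∀ i, E (rest i)) :
    (ofElemAddIdF π j a y).sum (fun m v => F (q + 1) (dcons m rest) (dconsV E v xs)) =
      F (q + 1) (dcons (a ⟨0, h0⟩) rest) (dconsV E (y ⟨0, h0⟩) xs) := by
  subst hj
  rw [ofElemAddIdF_apply_one]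
  exact DFinsupp.sum_single_index (hF _ _ _ 0 rfl)

theorem ofElemAddIdF_ins_apply_zero (hF : VanishesOnZeroArg F) (ι : Fin 0 → ℤ)
    (x : ∀ j, E (ι j)) :
    ins 𝕜 E (ofElemAddIdF π) F 0 ι x = F 1 (dcons 0 ι) (dconsV E π x) := by
  rw [ins, Fin.sum_univ_one, filter_isShuffle_eq_singleton_one (Or.inr (by simp)),
    Finset.sum_singleton, koszulSign_one, one_smul, sum_ofElemAddIdF_of_eq_zero hF (by simp)]
  exact rawForm_congr F (fun j => by fin_cases j; rfl) (fun j => by fin_cases j; rfl)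

theorem ofElemAddIdF_ins_apply_one (hF : VanishesOnZeroArg F) (ι : Fin 1 → ℤ)
    (x : ∀ j, E (ι j)) :
    ins 𝕜 E (ofElemAddIdF π) F 1 ι x = F 2 (dcons 0 ι) (dconsV E π x) + F 1 ι x := by
  rw [ins, Fin.sum_univ_two]
  congr 1
  · rw [filter_isShuffle_eq_singleton_one (Or.inl (by simp)), Finset.sum_singleton,
      koszulSign_one, one_smul, sum_ofElemAddIdF_of_eq_zero hF (by simp)]
    exact rawForm_congr F (fun j => by fin_cases j <;> rfl) (fun j => by fin_cases j <;> rfl)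
  · rw [filter_isShuffle_eq_singleton_one (Or.inr (by simp)), Finset.sum_singleton,
      koszulSign_one, one_smul, sum_ofElemAddIdF_of_eq_one hF (by simp) _ _ (by simp)]
    exact rawForm_congr F (fun j => by fin_cases j; rfl) (fun j => by fin_cases j; rfl)

theorem ofElemAddIdF_ins_apply_two (hF : VanishesOnZeroArg F) (ι : Fin 2 → ℤ)
    (x : ∀ j, E (ι j)) :
    ins 𝕜 E (ofElemAddIdF π) F 2 ι x = F 3 (dcons 0 ι) (dconsV E π x) + (F 2 ι x +
      koszulSign 𝕜 ι (Equiv.swap 0 1) •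
        F 2 (fun j => ι (Equiv.swap 0 1 j)) (fun j => x (Equiv.swap 0 1 j))) := by
  rw [ins, Fin.sum_univ_three]
  simp only [ofElemAddIdF_apply_of_two_le π (show 2 ≤ ((2 : Fin 3) : ℕ) by simp),
    DFinsupp.sum_zero_index, smul_zero, Finset.sum_const_zero, add_zero]
  congr 1
  · rw [filter_isShuffle_eq_singleton_one (Or.inl (by simp)), Finset.sum_singleton,
      koszulSign_one, one_smul, sum_ofElemAddIdF_of_eq_zero hF (by simp)]
    exact rawForm_congr F (fun j => by fin_cases j <;> rfl) (fun j => by fin_cases j <;> rfl)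
  · rw [filter_isShuffle_of_eq_one (by simp), Finset.sum_pair (by decide), koszulSign_one,
      one_smul, sum_ofElemAddIdF_of_eq_one hF (by simp) _ _ (by simp),
      sum_ofElemAddIdF_of_eq_one hF (by simp) _ _ (by simp)]
    congr 1
    · exact rawForm_congr F (fun j => by fin_cases j <;> rfl) (fun j => by fin_cases j <;> rfl)
    · congr 1
      exact rawForm_congr F (fun j => by fin_cases j <;> rfl) (fun j => by fin_cases j <;> rfl)

theorem ofElemAddIdF_ins_apply_of_three_le
    (hF : ∀ n, 3 ≤ n → ∀ (ι : Fin n → ℤ) (x : ∀ j, E (ι j)), F n ι x = 0) {n : ℕ} (hn : 3 ≤ n)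
    (ι : Fin n → ℤ) (x : ∀ j, E (ι j)) :
    ins 𝕜 E (ofElemAddIdF π) F n ι x = 0 := by
  refine Finset.sum_eq_zero fun k _ => Finset.sum_eq_zero fun σ _ => smul_eq_zero_of_right _ ?_
  by_cases hk : (k : ℕ) ≤ 1
  · exact DFinsupp.sum_eq_zero fun m => hF _ (by omega) _ _
  · rw [ofElemAddIdF_apply_of_two_le π (by omega), DFinsupp.sum_zero_index]

end Insertion

section Bracket

variable {π : E 0} {F : RawForm E}

theorem rnb_ofElemAddIdF_apply_zero (hF : VanishesOnZeroArg F) (ι : Fin 0 → ℤ)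
    (x : ∀ j, E (ι j)) :
    rnb 𝕜 E 0 1 (ofElemAddIdF π) F 0 ι x = F 1 (dcons 0 ι) (dconsV E π x) - F 0 ι x := by
  rw [rnb_zero_apply, ofElemAddIdF_ins_apply_zero hF, ins_ofElemAddIdF]

theorem rnb_ofElemAddIdF_apply_one (hF : VanishesOnZeroArg F) (ι : Fin 1 → ℤ)
    (x : ∀ j, E (ι j)) :
    rnb 𝕜 E 0 1 (ofElemAddIdF π) F 1 ι x = F 2 (dcons 0 ι) (dconsV E π x) := by
  rw [rnb_zero_apply, ofElemAddIdF_ins_apply_one hF, ins_ofElemAddIdF, add_sub_cancel_right]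

theorem rnb_ofElemAddIdF_apply_two (hF : IsAtMostBinary 𝕜 F) (ι : Fin 2 → ℤ)
    (x : ∀ j, E (ι j)) :
    rnb 𝕜 E 0 1 (ofElemAddIdF π) F 2 ι x = F 2 ι x := by
  have hsign : (-1 : 𝕜) ^ (ι 1 * ι 0) * (-1) ^ (ι 0 * ι 1) = 1 := by
    rw [mul_comm (ι 1), ← zpow_add₀ (by norm_num), Even.neg_one_zpow ⟨_, rfl⟩]
  rw [rnb_zero_apply, ofElemAddIdF_ins_apply_two hF.vanishesOnZeroArg, ins_ofElemAddIdF,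
    hF.apply_of_three_le 3 le_rfl, koszulSign_swap, hF.apply_two_swap, smul_smul, hsign,
    one_smul, zero_add, add_sub_cancel_right]

theorem rnb_ofElemAddIdF_apply_of_three_le (hF : IsAtMostBinary 𝕜 F) {n : ℕ} (hn : 3 ≤ n)
    (ι : Fin n → ℤ) (x : ∀ j, E (ι j)) :
    rnb 𝕜 E 0 1 (ofElemAddIdF π) F n ι x = 0 := by
  rw [rnb_zero_apply, ofElemAddIdF_ins_apply_of_three_le hF.apply_of_three_le hn,
    ins_ofElemAddIdF, hF.apply_of_three_le n hn, sub_zero]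

theorem IsAtMostBinary.rnb_ofElemAddIdF (hF : IsAtMostBinary 𝕜 F) :
    IsAtMostBinary 𝕜 (rnb 𝕜 E 0 1 (ofElemAddIdF π) F) where
  vanishesOnZeroArg n ι x j hx := by
    match n, ι, x, j with
    | 1, ι, x, 0 =>
      rw [rnb_ofElemAddIdF_apply_one hF.vanishesOnZeroArg]
      exact hF.vanishesOnZeroArg 2 _ _ 1 hx
    | 2, ι, x, j =>
      rw [rnb_ofElemAddIdF_apply_two hF]
      exact hF.vanishesOnZeroArg 2 _ _ j hx
    | n + 3, ι, x, _ => exact rnb_ofElemAddIdF_apply_of_three_le hF (by omega) ι x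
  apply_of_three_le _ hn := rnb_ofElemAddIdF_apply_of_three_le hF hn
  apply_two_swap ι x := by
    rw [rnb_ofElemAddIdF_apply_two hF, rnb_ofElemAddIdF_apply_two hF, hF.apply_two_swap]

theorem rnb_ofElemAddIdF_rnb_ofElemAddIdF_eq_iff (hF : IsAtMostBinary 𝕜 F) :
    rnb 𝕜 E 0 1 (ofElemAddIdF π) (rnb 𝕜 E 0 1 (ofElemAddIdF π) F) =
        rnb 𝕜 E 0 1 (ofElemAddIdF π) F ↔
      F 2 (fun _ => 0) (fun _ => π) =
        (2 : 𝕜) • (F 1 (fun _ => 0) (fun _ => π) - F 0 (fun _ => 0) (fun _ => π)) := by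
  have hG := hF.rnb_ofElemAddIdF (π := π)
  have hF0 : rnb 𝕜 E 0 1 (ofElemAddIdF π) F 0 (fun _ => 0) (fun _ => π) =
      F 1 (fun _ => 0) (fun _ => π) - F 0 (fun _ => 0) (fun _ => π) := by
    rw [rnb_ofElemAddIdF_apply_zero hF.vanishesOnZeroArg, rawForm_apply_dcons_const F]
  have hG0 : rnb 𝕜 E 0 1 (ofElemAddIdF π) (rnb 𝕜 E 0 1 (ofElemAddIdF π) F) 0 (fun _ => 0)
      (fun _ => π) = F 2 (fun _ => 0) (fun _ => π) -
        (F 1 (fun _ => 0) (fun _ => π) - F 0 (fun _ => 0) (fun _ => π)) := by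
    rw [rnb_ofElemAddIdF_apply_zero hG.vanishesOnZeroArg,
      rawForm_apply_dcons_const (rnb 𝕜 E 0 1 (ofElemAddIdF π) F),
      rnb_ofElemAddIdF_apply_one hF.vanishesOnZeroArg, rawForm_apply_dcons_const F, hF0]
  constructor
  · intro h
    have h0 := congrFun (congrFun (congrFun h 0) fun _ => 0) fun _ => π
    rw [hG0, hF0, sub_eq_iff_eq_add] at h0
    rw [h0, two_smul]
  · intro h
    funext n ι x
    match n, ι, x with
    | 0, ι, x =>
      obtain rfl : ι = fun _ => 0 := Subsingleton.elim _ _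
      obtain rfl : x = fun _ => π := Subsingleton.elim _ _
      rw [hG0, hF0, h, two_smul, add_sub_cancel_right]
    | 1, ι, x =>
      rw [rnb_ofElemAddIdF_apply_one hG.vanishesOnZeroArg, rnb_ofElemAddIdF_apply_two hF,
        rnb_ofElemAddIdF_apply_one hF.vanishesOnZeroArg]
    | 2, ι, x => exact rnb_ofElemAddIdF_apply_two hG ι x
    | n + 3, ι, x =>
      rw [rnb_ofElemAddIdF_apply_of_three_le hG (by omega),
        rnb_ofElemAddIdF_apply_of_three_le hF (by omega)]

end Bracket

end

theorem statement15_general (𝕜 : Type) [Field 𝕜] [CharZero 𝕜]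
    (E : ℤ → Type) [∀ i, AddCommGroup (E i)] [∀ i, Module 𝕜 (E i)]
    (C : E 1) (l1 l2 : RawForm E)
    (h1 : IsSVF 𝕜 E 1 l1) (h1a : IsArity E 1 l1)
    (h2 : IsSVF 𝕜 E 1 l2) (h2a : IsArity E 2 l2)
    (μ : RawForm E) (hμ : μ = ofElem E (DirectSum.of E 1 C) + l1 + l2)
    (π : E 0) :
    (rnb 𝕜 E 0 1 (ofElem E (DirectSum.of E 0 π) + idF E)
          (rnb 𝕜 E 0 1 (ofElem E (DirectSum.of E 0 π) + idF E) μ) =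
        rnb 𝕜 E 0 1 (ofElem E (DirectSum.of E 0 π) + idF E) μ ∧
      rnb 𝕜 E 0 0 (ofElem E (DirectSum.of E 0 π) + idF E)
        (ofElem E (DirectSum.of E 0 π) + idF E) = 0) ↔
      l1 1 (fun _ => (0 : ℤ)) (fun _ => π) - DirectSum.of E 1 C -
          (2 : 𝕜)⁻¹ • l2 2 (fun _ => (0 : ℤ)) (fun _ => π) = 0 := by
  subst hμ
  have hbin := IsAtMostBinary.ofElem_add_add (DirectSum.of E 1 C) h1.1 h1a h2.1 h2.2.1 h2a
  rw [rnb_zero_zero_self, eq_self, and_true]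
  refine (rnb_ofElemAddIdF_rnb_ofElemAddIdF_eq_iff (π := π) hbin).trans ?_
  simp only [Pi.add_apply, ofElem, h1a 0 (by decide), h1a 2 (by decide), h2a 0 (by decide),
    h2a 1 (by decide), OfNat.ofNat_ne_zero, one_ne_zero, reduceIte, add_zero, zero_add]
  rw [sub_eq_zero, eq_inv_smul_iff₀ two_ne_zero, eq_comm]

/-- Let `μ = C + l₁ + l₂` be a curved symmetric DGLA structure on `E` and
`π ∈ E₀`.  Then `Id_E + π` is a Nijenhuis vector valued form with curvature `π`, with respect
to `μ` and with square itself, iff `π` is a Maurer–Cartan element of the curved DGLA, i.e.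
`(l₁(π) - C) - ½ l₂(π,π) = 0`. -/
theorem statement15 (𝕜 : Type) [Field 𝕜] [CharZero 𝕜]
    (E : ℤ → Type) [∀ i, AddCommGroup (E i)] [∀ i, Module 𝕜 (E i)]
    (C : E 1) (l1 l2 : RawForm E)
    (h1 : IsSVF 𝕜 E 1 l1) (h1a : IsArity E 1 l1)
    (h2 : IsSVF 𝕜 E 1 l2) (h2a : IsArity E 2 l2)
    (μ : RawForm E) (hμ : μ = ofElem E (DirectSum.of E 1 C) + l1 + l2)
    (hμμ : rnb 𝕜 E 1 1 μ μ = 0) (π : E 0) :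
    (rnb 𝕜 E 0 1 (ofElem E (DirectSum.of E 0 π) + idF E)
          (rnb 𝕜 E 0 1 (ofElem E (DirectSum.of E 0 π) + idF E) μ) =
        rnb 𝕜 E 0 1 (ofElem E (DirectSum.of E 0 π) + idF E) μ ∧
      rnb 𝕜 E 0 0 (ofElem E (DirectSum.of E 0 π) + idF E)
        (ofElem E (DirectSum.of E 0 π) + idF E) = 0) ↔
      l1 1 (fun _ => (0 : ℤ)) (fun _ => π) - DirectSum.of E 1 C -
          (2 : 𝕜)⁻¹ • l2 2 (fun _ => (0 : ℤ)) (fun _ => π) = 0 :=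
  statement15_general 𝕜 E C l1 l2 h1 h1a h2 h2a μ hμ π

end RN
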